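/- arXiv:1109.3083 — 3 statements merged into one kernel-verified Lean document; each statement's English description precedes it below -/
import Mathlib

section
/- Let T be a Hom-finite triangulated category (over a field k) and let f : A → B be a morphism in T. Then the cone of f is isomorphic to A[1] ⊕ B if and only if f = 0. -/
/-!
Apply `Hom(A, -)` to the triangle: the long exact sequence gives
`Hom(A, B) → Hom(A, C) → Hom(A, A⟦1⟧)` exact at the middle term, so
`dim Hom(A, C) ≤ rank (- ≫ g) + dim Hom(A, A⟦1⟧)`. If `C ≅ A⟦1⟧ ⊞ B`, the left side is
`dim Hom(A, A⟦1⟧) + dim Hom(A, B)`, hence `- ≫ g` is injective on `Hom(A, B)`; since `f ≫ g = 0`,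
this forces `f = 0`. Conversely, a triangle whose first map vanishes splits.
-/

open CategoryTheory Limits Pretriangulated Module

theorem LinearMap.injective_of_exact_of_finrank_add_le {K U V W : Type*} [DivisionRing K]
    [AddCommGroup U] [Module K U] [FiniteDimensional K U]
    [AddCommGroup V] [Module K V] [FiniteDimensional K V]
    [AddCommGroup W] [Module K W] [FiniteDimensional K W]
    {L₁ : U →ₗ[K] V} {L₂ : V →ₗ[K] W} (hexact : Function.Exact L₁ L₂)
    (hdim : finrank K U + finrank K W ≤ finrank K V) : Function.Injective L₁ := by
  have hV := L₂.finrank_range_add_finrank_ker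
  have hU := L₁.finrank_range_add_finrank_ker
  have hW : finrank K (LinearMap.range L₂) ≤ finrank K W := Submodule.finrank_le _
  rw [hexact.linearMap_ker_eq] at hV
  rw [← LinearMap.ker_eq_bot, ← Submodule.finrank_eq_zero]
  omega

namespace CategoryTheory.Limits

variable (k : Type*) [Semiring k] {C : Type*} [Category C] [Preadditive C] [Linear k C]

noncomputable def biprod.homLinearEquiv (X Y Z : C) [HasBinaryBiproduct Y Z] :
    (X ⟶ Y ⊞ Z) ≃ₗ[k] (X ⟶ Y) × (X ⟶ Z) where
  toFun u := (u ≫ biprod.fst, u ≫ biprod.snd)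
  invFun p := biprod.lift p.1 p.2
  map_add' u v := by simp
  map_smul' c u := by simp
  left_inv u := by ext <;> simp
  right_inv p := by simp

end CategoryTheory.Limits

namespace CategoryTheory.Pretriangulated.Triangle

-- Unqualified, `shiftFunctor` would resolve to `Triangle.shiftFunctor` in this namespace.
variable (k : Type*) [Field k] {C : Type*} [Category C] [Preadditive C] [Linear k C]
  [HasZeroObject C] [HasShift C ℤ] [∀ n : ℤ, (CategoryTheory.shiftFunctor C n).Additive]
  [Pretriangulated C]

theorem rightComp_exact₃ (T : Triangle C) (hT : T ∈ distTriang C) (X : C) :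
    Function.Exact (Linear.rightComp k X T.mor₂) (Linear.rightComp k X T.mor₃) := by
  rw [LinearMap.exact_iff]
  apply le_antisymm
  · intro u hu
    obtain ⟨v, hv⟩ := T.coyoneda_exact₃ hT u hu
    exact ⟨v, hv.symm⟩
  · rintro _ ⟨v, rfl⟩
    simp [comp_distTriang_mor_zero₂₃ _ hT]

/-- If `Hom(X, T.obj₃)` is as large as it would be for a split triangle, every morphism
`X ⟶ T.obj₁` is killed by `T.mor₁`. -/
theorem comp_mor₁_eq_zero_of_finrank_le (T : Triangle C) (hT : T ∈ distTriang C) {X : C}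
    [FiniteDimensional k (X ⟶ T.obj₂)] [FiniteDimensional k (X ⟶ T.obj₃)]
    [FiniteDimensional k (X ⟶ T.obj₁⟦(1 : ℤ)⟧)]
    (hdim : finrank k (X ⟶ T.obj₂) + finrank k (X ⟶ T.obj₁⟦(1 : ℤ)⟧) ≤ finrank k (X ⟶ T.obj₃))
    (u : X ⟶ T.obj₁) : u ≫ T.mor₁ = 0 := by
  apply LinearMap.injective_of_exact_of_finrank_add_le (rightComp_exact₃ k T hT X) hdim
  simp [comp_distTriang_mor_zero₁₂ _ hT]

end CategoryTheory.Pretriangulated.Triangle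

/-- In a Hom-finite (over a field `k`) triangulated category `T`,
the cone of a morphism `f : A ⟶ B` is isomorphic to `A⟦1⟧ ⊕ B` iff `f = 0`. -/
theorem stmt0 {k : Type*} [Field k] {T : Type*} [Category T] [Preadditive T]
    [CategoryTheory.Linear k T] [HasZeroObject T] [HasShift T ℤ]
    [∀ n : ℤ, (shiftFunctor T n).Additive] [Pretriangulated T] [HasBinaryBiproducts T]
    (homFinite : ∀ X Y : T, FiniteDimensional k (X ⟶ Y))
    {A B C : T} (f : A ⟶ B) (g : B ⟶ C) (h : C ⟶ A⟦(1 : ℤ)⟧)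
    (hT : Triangle.mk f g h ∈ distTriang T) :
    Nonempty (C ≅ (A⟦(1 : ℤ)⟧) ⊞ B) ↔ f = 0 := by
  constructor
  · have := homFinite
    rintro ⟨e⟩
    have hdim : finrank k (A ⟶ C) = finrank k (A ⟶ A⟦(1 : ℤ)⟧) + finrank k (A ⟶ B) := by
      rw [((Linear.homCongr k (Iso.refl A) e).trans
        (biprod.homLinearEquiv k A _ B)).finrank_eq, finrank_prod]
    rw [← Category.id_comp f]
    exact Triangle.comp_mor₁_eq_zero_of_finrank_le k _ hT
      (show finrank k (A ⟶ B) + finrank k (A ⟶ A⟦(1 : ℤ)⟧) ≤ finrank k (A ⟶ C) by omega) (𝟙 A)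
  · intro hf
    obtain ⟨e, -, -⟩ := exists_iso_binaryBiproduct_of_distTriang _ (rot_of_distTriang _ hT)
      (by
        simp only [Triangle.rotate_mor₃, Triangle.mk_mor₁, hf]
        exact neg_eq_zero.mpr (Functor.map_zero _ _ _))
    exact ⟨e.trans (biprod.braiding _ _)⟩
end

section
/- Let F : T → T' be an exact (triangulated) functor between triangulated categories, where T is Hom-finite over a field k. If F is essentially injective (i.e. F(A) ≅ F(B) in T' implies A ≅ B in T), then F is faithful. -/
open CategoryTheory Limits Pretriangulated

/-!
If `F.map f = 0` for `f : A ⟶ B`, then `F` sends the cone of `f` and the cone of `0 : A ⟶ B` to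
cones of the same morphism, so by essential injectivity the two cones are isomorphic.
In a Hom-finite triangulated category the long exact sequence of `Hom(A, -)` along a
distinguished triangle `A → B → Z → A⟦1⟧` gives
`dim Hom(A, Z) + rk (f ∘ -) + rk (f⟦1⟧ ∘ -) = dim Hom(A, B) + dim Hom(A, A⟦1⟧)`,
so the cone determines `rk (f ∘ -) + rk (f⟦1⟧ ∘ -)`. For the zero map this is `0`, hence
`f ∘ - : Hom(A, A) → Hom(A, B)` vanishes and `f = f ∘ 𝟙 = 0`. Faithfulness follows by
applying this to `f - g`.
-/

namespace CategoryTheory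

lemma Linear.ker_rightComp_eq_range_rightComp {k : Type*} [Semiring k] {C : Type*}
    [Category C] [Preadditive C] [Linear k C] (A : C) {X Y Z : C} {u : X ⟶ Y} {v : Y ⟶ Z}
    (huv : u ≫ v = 0) (hexact : ∀ φ : A ⟶ Y, φ ≫ v = 0 → ∃ ψ : A ⟶ X, φ = ψ ≫ u) :
    LinearMap.ker (Linear.rightComp k A v) = LinearMap.range (Linear.rightComp k A u) := by
  ext φ
  constructor
  · intro hφ
    obtain ⟨ψ, hψ⟩ := hexact φ hφ
    exact ⟨ψ, hψ.symm⟩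
  · rintro ⟨ψ, rfl⟩
    simp [huv]

section HomFinite

variable (k : Type*) [Field k] {C : Type*} [Category C] [Preadditive C] [Linear k C]
  [HasZeroObject C] [HasShift C ℤ] [∀ n : ℤ, (shiftFunctor C n).Additive] [Pretriangulated C]

open Module

lemma Pretriangulated.finrank_hom_add_finrank_range_rightComp
    [∀ X Y : C, FiniteDimensional k (X ⟶ Y)] {X Y Z : C} {f : X ⟶ Y} {g : Y ⟶ Z}
    {h : Z ⟶ X⟦(1 : ℤ)⟧} (hT : Triangle.mk f g h ∈ distTriang C) (A : C) :
    finrank k (A ⟶ Z) + finrank k (LinearMap.range (Linear.rightComp k A f)) +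
        finrank k (LinearMap.range (Linear.rightComp k A (f⟦(1 : ℤ)⟧'))) =
      finrank k (A ⟶ Y) + finrank k (A ⟶ X⟦(1 : ℤ)⟧) := by
  have exact₂ : LinearMap.ker (Linear.rightComp k A g) =
      LinearMap.range (Linear.rightComp k A f) :=
    Linear.ker_rightComp_eq_range_rightComp A (comp_distTriang_mor_zero₁₂ _ hT)
      (Triangle.coyoneda_exact₂ _ hT)
  have exact₃ : LinearMap.ker (Linear.rightComp k A h) =
      LinearMap.range (Linear.rightComp k A g) :=
    Linear.ker_rightComp_eq_range_rightComp A (comp_distTriang_mor_zero₂₃ _ hT)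
      (Triangle.coyoneda_exact₃ _ hT)
  have exact₁ : LinearMap.ker (Linear.rightComp k A (f⟦(1 : ℤ)⟧')) =
      LinearMap.range (Linear.rightComp k A h) :=
    Linear.ker_rightComp_eq_range_rightComp A (comp_distTriang_mor_zero₃₁ _ hT)
      (Triangle.coyoneda_exact₁ _ hT)
  have rank₂ := LinearMap.finrank_range_add_finrank_ker (Linear.rightComp k A g)
  have rank₃ := LinearMap.finrank_range_add_finrank_ker (Linear.rightComp k A h)
  have rank₁ :=
    LinearMap.finrank_range_add_finrank_ker (Linear.rightComp k A (f⟦(1 : ℤ)⟧'))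
  rw [exact₂] at rank₂
  rw [exact₃] at rank₃
  rw [exact₁] at rank₁
  omega

lemma Pretriangulated.eq_zero_of_iso_cone_zero [∀ X Y : C, FiniteDimensional k (X ⟶ Y)]
    {A B Z Z₀ : C} {f : A ⟶ B} {g : B ⟶ Z} {h : Z ⟶ A⟦(1 : ℤ)⟧}
    {g₀ : B ⟶ Z₀} {h₀ : Z₀ ⟶ A⟦(1 : ℤ)⟧}
    (hf : Triangle.mk f g h ∈ distTriang C) (h0 : Triangle.mk 0 g₀ h₀ ∈ distTriang C)
    (e : Z ≅ Z₀) : f = 0 := by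
  have hom_cone : finrank k (A ⟶ Z) = finrank k (A ⟶ Z₀) :=
    (Linear.homCongr k (Iso.refl A) e).finrank_eq
  have rank_eq_zero {X Y : C} {φ : X ⟶ Y} (hφ : φ = 0) :
      finrank k (LinearMap.range (Linear.rightComp k A φ)) = 0 :=
    Submodule.finrank_eq_zero.mpr (LinearMap.range_eq_bot.mpr (by subst hφ; ext; simp))
  have rank_f := finrank_hom_add_finrank_range_rightComp k hf A
  have rank_zero := finrank_hom_add_finrank_range_rightComp k h0 A
  rw [rank_eq_zero rfl, rank_eq_zero (Functor.map_zero _ _ _)] at rank_zero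
  have range_f : LinearMap.range (Linear.rightComp k A f) = ⊥ :=
    Submodule.finrank_eq_zero.mp (by omega)
  have mem := LinearMap.mem_range_self (Linear.rightComp k A f) (𝟙 A)
  rw [range_f] at mem
  simpa using mem

end HomFinite

lemma Functor.nonempty_iso_obj_cone_of_map_eq {C D : Type*} [Category C] [Preadditive C]
    [HasZeroObject C] [HasShift C ℤ] [∀ n : ℤ, (shiftFunctor C n).Additive] [Pretriangulated C]
    [Category D] [Preadditive D] [HasZeroObject D] [HasShift D ℤ]
    [∀ n : ℤ, (shiftFunctor D n).Additive] [Pretriangulated D]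
    (F : C ⥤ D) [F.CommShift ℤ] [F.IsTriangulated] {A B Z₁ Z₂ : C} {f₁ f₂ : A ⟶ B}
    {g₁ : B ⟶ Z₁} {h₁ : Z₁ ⟶ A⟦(1 : ℤ)⟧} {g₂ : B ⟶ Z₂} {h₂ : Z₂ ⟶ A⟦(1 : ℤ)⟧}
    (hF : F.map f₁ = F.map f₂) (hT₁ : Triangle.mk f₁ g₁ h₁ ∈ distTriang C)
    (hT₂ : Triangle.mk f₂ g₂ h₂ ∈ distTriang C) : Nonempty (F.obj Z₁ ≅ F.obj Z₂) :=
  ⟨Triangle.π₃.mapIso (isoTriangleOfIso₁₂ _ _ (F.map_distinguished _ hT₁)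
    (F.map_distinguished _ hT₂) (Iso.refl _) (Iso.refl _) (by
      change F.map f₁ ≫ 𝟙 _ = 𝟙 _ ≫ F.map f₂
      simpa using hF))⟩

end CategoryTheory

/-- An exact functor from a Hom-finite (over a field `k`) triangulated
category which is essentially injective is faithful. -/
theorem stmt1 {k : Type*} [Field k] {T : Type*} [Category T] [Preadditive T]
    [CategoryTheory.Linear k T] [HasZeroObject T] [HasShift T ℤ]
    [∀ n : ℤ, (shiftFunctor T n).Additive] [Pretriangulated T]
    {T' : Type*} [Category T'] [Preadditive T'] [HasZeroObject T'] [HasShift T' ℤ]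
    [∀ n : ℤ, (shiftFunctor T' n).Additive] [Pretriangulated T']
    (homFinite : ∀ X Y : T, FiniteDimensional k (X ⟶ Y))
    (F : T ⥤ T') [F.CommShift ℤ] [F.IsTriangulated]
    (hinj : ∀ A B : T, Nonempty (F.obj A ≅ F.obj B) → Nonempty (A ≅ B)) :
    F.Faithful := by
  refine ⟨fun {A B f g} hfg => sub_eq_zero.mp ?_⟩
  obtain ⟨Z, _, _, hT⟩ := distinguished_cocone_triangle (f - g)
  obtain ⟨Z₀, _, _, hT₀⟩ := distinguished_cocone_triangle (0 : A ⟶ B)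
  obtain ⟨e⟩ := hinj Z Z₀ (F.nonempty_iso_obj_cone_of_map_eq (by simp [hfg]) hT hT₀)
  exact eq_zero_of_iso_cone_zero k hT hT₀ e
end

section
/- Let F : T → T' be an exact functor between triangulated categories admitting a right adjoint G : T' → T. Then G is also an exact functor. -/
open CategoryTheory Limits Pretriangulated

/-- A right adjoint of an exact functor between triangulated categories
is itself exact: it carries a commutation-with-shift structure making it triangulated. -/
theorem stmt2 {T : Type*} [Category T] [Preadditive T] [HasZeroObject T] [HasShift T ℤ]
    [∀ n : ℤ, (shiftFunctor T n).Additive] [Pretriangulated T]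
    {T' : Type*} [Category T'] [Preadditive T'] [HasZeroObject T'] [HasShift T' ℤ]
    [∀ n : ℤ, (shiftFunctor T' n).Additive] [Pretriangulated T']
    (F : T ⥤ T') [F.CommShift ℤ] [F.IsTriangulated]
    (G : T' ⥤ T) (adj : F ⊣ G) :
    ∃ c : G.CommShift ℤ, letI := c; G.IsTriangulated := by
  let := adj.rightAdjointCommShift ℤ
  have := adj.commShift_of_leftAdjoint ℤ
  exact ⟨_, adj.isTriangulated_rightAdjoint⟩
end
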